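/- arXiv:1307.7667 — 6 statements merged into one kernel-verified Lean document; each statement's English description precedes it below -/
import Mathlib

section
/- Let H be a finite set of hypotheses, F ⊆ H the set of false hypotheses, and N a set of sample sizes. Suppose ρ maps (R, A, n) with R, A ⊆ H disjoint and n ∈ N to a subset of H \ (R ∪ A), and define R₀ = ∅ and R_{i+1} = R_i ∪ ρ(R_i, A_i, n_{i+1}) where A_i ⊆ H satisfy A_i ∩ R_i = ∅, and n_{i+1} ∈ N is arbitrary (with ρ(R, A, ∞) = ∅). If (1) for all R ⊆ R' ⊆ H, A with A ∩ R = ∅, and n ∈ N we have ρ(R, A, n) ⊆ ρ(R', ∅, n) ∪ R', and (2) ρ(F, ∅, n) ⊆ F for all n ∈ N, then R_i ⊆ F for every i ≥ 0. -/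
open Finset

theorem rho_subset_of_subset {H : Type*} [DecidableEq H] {N : Set ℕ∞} {F R A : Finset H}
    {ρ : Finset H → Finset H → ℕ∞ → Finset H} {m : ℕ∞}
    (mono : ∀ (R' R'' A' : Finset H), R' ⊆ R'' → Disjoint A' R' →
      ∀ m ∈ N, ρ R' A' m ⊆ ρ R'' ∅ m ∪ R'')
    (hF : ∀ m ∈ N, ρ F ∅ m ⊆ F) (hR : R ⊆ F) (hA : Disjoint A R) (hm : m ∈ N) :
    ρ R A m ⊆ F :=
  (mono R F A hR hA m hm).trans (union_subset (hF m hm) Subset.rfl)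

theorem rejection_principle_pathwise_general
    {H : Type*} [DecidableEq H]
    (N : Set ℕ∞) (F : Finset H)
    (ρ : Finset H → Finset H → ℕ∞ → Finset H)
    (htop : ∀ R A, ρ R A ⊤ = ∅)
    (A : ℕ → Finset H) (n : ℕ → ℕ∞) (R : ℕ → Finset H)
    (hn : ∀ i, n (i + 1) ∈ N ∨ n (i + 1) = ⊤)
    (hR0 : R 0 = ∅)
    (hRstep : ∀ i, R (i + 1) = R i ∪ ρ (R i) (A i) (n (i + 1)))
    (hA : ∀ i, Disjoint (A i) (R i))
    (mono : ∀ (R' R'' A' : Finset H), R' ⊆ R'' → Disjoint A' R' →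
      ∀ m ∈ N, ρ R' A' m ⊆ ρ R'' ∅ m ∪ R'')
    (hF : ∀ m ∈ N, ρ F ∅ m ⊆ F) :
    ∀ i, R i ⊆ F := by
  intro i
  induction i with
  | zero => exact hR0 ▸ empty_subset F
  | succ i ih =>
    rw [hRstep i]
    refine union_subset ih ?_
    rcases hn i with hmem | htop_eq
    · exact rho_subset_of_subset mono hF ih (hA i) hmem
    · rw [htop_eq, htop]
      exact empty_subset F

/-- Deterministic core of the rejection principle: if the rejection function is
monotone and never rejects outside the false hypotheses `F` when fed `F`, then
every iterate `R i` of the procedure is contained in `F`. -/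
theorem rejection_principle_pathwise
    {H : Type*} [Fintype H] [DecidableEq H]
    (N : Set ℕ∞) (hN : ⊤ ∉ N) (F : Finset H)
    (ρ : Finset H → Finset H → ℕ∞ → Finset H)
    (hdom : ∀ R A n, Disjoint (ρ R A n) (R ∪ A))
    (htop : ∀ R A, ρ R A ⊤ = ∅)
    (A : ℕ → Finset H) (n : ℕ → ℕ∞) (R : ℕ → Finset H)
    (hn : ∀ i, n (i + 1) ∈ N ∨ n (i + 1) = ⊤)
    (hR0 : R 0 = ∅)
    (hRstep : ∀ i, R (i + 1) = R i ∪ ρ (R i) (A i) (n (i + 1)))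
    (hA : ∀ i, Disjoint (A i) (R i))
    (mono : ∀ (R' R'' A' : Finset H), R' ⊆ R'' → Disjoint A' R' →
      ∀ m ∈ N, ρ R' A' m ⊆ ρ R'' ∅ m ∪ R'')
    (hF : ∀ m ∈ N, ρ F ∅ m ⊆ F) :
    ∀ i, R i ⊆ F :=
  rejection_principle_pathwise_general N F ρ htop A n R hn hR0 hRstep hA mono hF
end

section
/- If for each j = 1, ..., k and each s = 1, ..., k, the sequential test statistic T_n^{(j)} satisfies P_{θ^{(j)}}(T_n^{(j)} ≥ B_s^{(j)} for some n ∈ N) ≤ α/(k − s + 1) for all θ^{(j)} ∈ H^{(j)}, then the Bartroff–Lai sequential step-down procedure (which at each stage rejects active hypotheses whose standardized statistics are at least k minus the number of previously rejected hypotheses) has FWER(θ) ≤ α for all θ ∈ Θ. -/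
open MeasureTheory Finset
open scoped ENNReal

/-!
Fix `θ` and let `S` be the set of its true hypotheses, `t = #S`. Look at the first stage at which
a true hypothesis `j` is rejected. Before that stage only false hypotheses have been rejected,
so `k - |R| ≥ t`, and `j` is rejected only if its standardized statistic reaches `t`, i.e. if
`T^{(j)}` crosses `B_s^{(j)}` with `s = k - t + 1`. Hence a family-wise error forces one of the
`t` true nulls to cross its level-`α / t` boundary, and the Bonferroni bound concludes.
-/

theorem measure_biUnion_le_of_le_div_card {Ω ι : Type*} [MeasurableSpace Ω] {μ : Measure Ω}
    {S : Finset ι} {E : ι → Set Ω} {α : ℝ≥0∞} (hE : ∀ j ∈ S, μ (E j) ≤ α / #S) :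
    μ (⋃ j ∈ S, E j) ≤ α :=
  calc μ (⋃ j ∈ S, E j) ≤ ∑ j ∈ S, μ (E j) := measure_biUnion_finset_le S E
    _ ≤ ∑ _j ∈ S, α / #S := sum_le_sum hE
    _ = #S * (α / #S) := by rw [sum_const, nsmul_eq_mul]
    _ ≤ α := ENNReal.mul_div_le

section StepDown

variable {ι : Type*} [DecidableEq ι] {k : ℕ}
  {ρ : Finset ι → Finset ι → ℕ → Finset ι} {R A : ℕ → Finset ι} {N : Set ℕ}

theorem exists_first_rejection_of_mem (hR0 : R 0 = ∅)
    (hRstep : ∀ i, R (i + 1) = R i ∨ ∃ m ∈ N, R (i + 1) = R i ∪ ρ (R i) (A i) m)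
    {S : Finset ι} {n : ℕ} {j : ι} (hjS : j ∈ S) (hjR : j ∈ R n) :
    ∃ i, Disjoint (R i) S ∧ ∃ j ∈ S, ∃ m ∈ N, j ∈ ρ (R i) (A i) m := by
  obtain ⟨i, hfresh, hhit⟩ := Nat.exists_not_and_succ_of_not_zero_of_exists
    (p := fun i => ¬ Disjoint (R i) S) (by simp [hR0]) ⟨n, not_disjoint_iff.mpr ⟨j, hjR, hjS⟩⟩
  rw [not_not] at hfresh
  obtain ⟨j, hjR, hjS⟩ := not_disjoint_iff.mp hhit
  refine ⟨i, hfresh, j, hjS, ?_⟩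
  have hjR_i : j ∉ R i := disjoint_right.mp hfresh hjS
  rcases hRstep i with hstay | ⟨m, hmN, hgrow⟩
  · exact absurd (hstay ▸ hjR) hjR_i
  · rw [hgrow, mem_union] at hjR
    exact ⟨m, hmN, hjR.resolve_left hjR_i⟩

theorem exists_crossing_of_mem_rejected [Fintype ι] {T : ℕ → ι → ℝ} {Bcrit : ι → ℕ → ℝ}
    {φ : ι → ℝ → ℝ} (hk : Fintype.card ι ≤ k) (hφmono : ∀ j, StrictMono (φ j))
    (hφB : ∀ j s, 1 ≤ s → s ≤ k → φ j (Bcrit j s) = (k : ℝ) - s + 1)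
    (hρ : ∀ R A m j, j ∈ ρ R A m → (k : ℝ) - #R ≤ φ j (T m j))
    (hR0 : R 0 = ∅)
    (hRstep : ∀ i, R (i + 1) = R i ∨ ∃ m ∈ N, R (i + 1) = R i ∪ ρ (R i) (A i) m)
    {S : Finset ι} {n : ℕ} {j : ι} (hjS : j ∈ S) (hjR : j ∈ R n) :
    ∃ j ∈ S, ∃ m ∈ N, Bcrit j (k - #S + 1) ≤ T m j := by
  obtain ⟨i, hfresh, j, hjS, m, hmN, hjρ⟩ := exists_first_rejection_of_mem hR0 hRstep hjS hjR
  refine ⟨j, hjS, m, hmN, (hφmono j).le_iff_le.mp ?_⟩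
  have hS : 1 ≤ #S := card_pos.mpr ⟨j, hjS⟩
  have hcard : #(R i) + #S ≤ k :=
    (card_union_of_disjoint hfresh).symm.le.trans ((card_le_univ _).trans hk)
  have hthreshold : φ j (Bcrit j (k - #S + 1)) = #S := by
    rw [hφB j _ le_add_self (by omega), Nat.cast_add_one, Nat.cast_sub (by omega)]
    ring
  have hcard' : (#(R i) : ℝ) + #S ≤ k := by exact_mod_cast hcard
  linarith [hρ _ _ _ _ hjρ]

end StepDown

theorem stepdown_FWER_control_general
    {Ω ϑ ι : Type*} [MeasurableSpace Ω] [Fintype ι] [DecidableEq ι]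
    (P : ϑ → Measure Ω)
    (Hyp : ι → Set ϑ) (N : Set ℕ) (α : ℝ≥0∞)
    (T : Ω → ℕ → ι → ℝ) (Bcrit : ι → ℕ → ℝ) (φ : ι → ℝ → ℝ)
    (k : ℕ) (hk : k = Fintype.card ι)
    (hφmono : ∀ j, StrictMono (φ j))
    (hφB : ∀ j s, 1 ≤ s → s ≤ k → φ j (Bcrit j s) = (k : ℝ) - s + 1)
    (herr : ∀ j θ, θ ∈ Hyp j → ∀ s, 1 ≤ s → s ≤ k →
      P θ {ω | ∃ n ∈ N, Bcrit j s ≤ T ω n j} ≤ α / ((k - s + 1 : ℕ) : ℝ≥0∞))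
    (ρ : Ω → Finset ι → Finset ι → ℕ → Finset ι)
    (hρ : ∀ ω R A n j, j ∈ ρ ω R A n ↔
      j ∉ R ∧ j ∉ A ∧ (k : ℝ) - R.card ≤ φ j (T ω n j))
    (R A : Ω → ℕ → Finset ι)
    (hR0 : ∀ ω, R ω 0 = ∅)
    (hRstep : ∀ ω i, R ω (i + 1) = R ω i ∨
      ∃ m ∈ N, R ω (i + 1) = R ω i ∪ ρ ω (R ω i) (A ω i) m) :
    ∀ θ, P θ {ω | ∃ j ∈ R ω k, θ ∈ Hyp j} ≤ α := by
  intro θ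
  classical
  set S : Finset ι := univ.filter (θ ∈ Hyp ·)
  have hsub : {ω | ∃ j ∈ R ω k, θ ∈ Hyp j} ⊆
      ⋃ j ∈ S, {ω | ∃ n ∈ N, Bcrit j (k - #S + 1) ≤ T ω n j} := by
    rintro ω ⟨j, hjR, hjθ⟩
    obtain ⟨j, hjS, hcross⟩ := exists_crossing_of_mem_rejected hk.ge hφmono hφB
      (fun R A m j hj => ((hρ ω R A m j).mp hj).2.2) (hR0 ω) (hRstep ω)
      (S := S) (by simpa [S] using hjθ) hjR
    exact Set.mem_biUnion hjS hcross
  refine (measure_mono hsub).trans (measure_biUnion_le_of_le_div_card fun j hj => ?_)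
  have hS : 1 ≤ #S := card_pos.mpr ⟨j, hj⟩
  have hSk : #S ≤ k := hk ▸ card_le_univ S
  have hlevel : k - (k - #S + 1) + 1 = #S := by omega
  have hnull := herr j θ (by simpa [S] using hj) (k - #S + 1) le_add_self (by omega)
  rwa [hlevel] at hnull

/-- Corollary 3.1: FWER control of the Bartroff–Lai sequential step-down
procedure. If each sequential statistic marginally satisfies
`P_θ(T_n^{(j)} ≥ B_s^{(j)} for some n ∈ N) ≤ α/(k−s+1)` under the null,
then the procedure whose rejection function is
`ρ(R,A,n) = {j ∉ R ∪ A : φ_j(T_n^{(j)}) ≥ k − |R|}` satisfies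
`FWER(θ) ≤ α` for all `θ`. -/
theorem stepdown_FWER_control
    {Ω ϑ ι : Type*} [MeasurableSpace Ω] [Fintype ι] [DecidableEq ι]
    (P : ϑ → Measure Ω) [∀ θ, IsProbabilityMeasure (P θ)]
    (Hyp : ι → Set ϑ) (N : Set ℕ) (α : ℝ≥0∞)
    (T : Ω → ℕ → ι → ℝ) (Bcrit : ι → ℕ → ℝ) (φ : ι → ℝ → ℝ)
    (k : ℕ) (hk : k = Fintype.card ι)
    (hφmono : ∀ j, StrictMono (φ j))
    (hφB : ∀ j s, 1 ≤ s → s ≤ k → φ j (Bcrit j s) = (k : ℝ) - s + 1)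
    (herr : ∀ j θ, θ ∈ Hyp j → ∀ s, 1 ≤ s → s ≤ k →
      P θ {ω | ∃ n ∈ N, Bcrit j s ≤ T ω n j} ≤ α / ((k - s + 1 : ℕ) : ℝ≥0∞))
    (ρ : Ω → Finset ι → Finset ι → ℕ → Finset ι)
    (hρ : ∀ ω R A n j, j ∈ ρ ω R A n ↔
      j ∉ R ∧ j ∉ A ∧ (k : ℝ) - R.card ≤ φ j (T ω n j))
    (R A : Ω → ℕ → Finset ι)
    (hR0 : ∀ ω, R ω 0 = ∅)
    (hA : ∀ ω i, Disjoint (A ω i) (R ω i))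
    (hRstep : ∀ ω i, R ω (i + 1) = R ω i ∨
      ∃ m ∈ N, R ω (i + 1) = R ω i ∪ ρ ω (R ω i) (A ω i) m) :
    ∀ θ, P θ {ω | ∃ j ∈ R ω k, θ ∈ Hyp j} ≤ α :=
  stepdown_FWER_control_general P Hyp N α T Bcrit φ k hk hφmono hφB herr ρ hρ R A hR0 hRstep
end

section
/- Let H₁, ..., H_s be a sequentially exclusive partition of H, i.e., for each i, if all hypotheses in ⋃_{i'<i} H_{i'} are false then H_i contains at most one true hypothesis. Suppose at least one hypothesis is true, let ℓ* = min{ℓ : H_ℓ contains a true hypothesis}, and suppose all hypotheses in ⋃_{ℓ<ℓ*} H_ℓ are false. Then H_{ℓ*} contains exactly one true hypothesis H^{(j*)}; moreover, for any n, if a true hypothesis H^{(j)} belongs to ρ(F, ∅, n) = {H^{(j)} ∉ F : T_n^{(j)} ≥ B^{(j)} and H_ℓ ⊆ F for all ℓ < i_j}, then j = j*. -/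
theorem idx_eq_of_forall_idx_lt_mem {H : Type*} (idx : H → ℕ) (F : Set H) {j j' : H}
    (hj : j ∉ F) (hj' : j' ∉ F) (h : ∀ k, idx k < idx j → k ∈ F)
    (h' : ∀ k, idx k < idx j' → k ∈ F) : idx j = idx j' :=
  le_antisymm (not_lt.1 fun hlt => hj' (h j' hlt)) (not_lt.1 fun hlt => hj (h' j hlt))

theorem inorder_unique_true_at_risk_general
    {H : Type*}
    (idx : H → ℕ)
    (F : Finset H)
    (hexc : ∀ i, (∀ j, idx j < i → j ∈ F) →
      ∀ j j', j ∉ F → j' ∉ F → idx j = i → idx j' = i → j = j')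
    (ℓstar : ℕ)
    (hℓex : ∃ j, j ∉ F ∧ idx j = ℓstar)
    (hearlier : ∀ j, idx j < ℓstar → j ∈ F)
    (T : ℕ → H → ℝ) (B : H → ℝ) :
    ∃ jstar, (jstar ∉ F ∧ idx jstar = ℓstar) ∧
      (∀ j, j ∉ F → idx j = ℓstar → j = jstar) ∧
      ∀ (n : ℕ) (j : H), j ∉ F → B j ≤ T n j →
        (∀ j', idx j' < idx j → j' ∈ F) → j = jstar := by
  obtain ⟨jstar, hjstar, rfl⟩ := hℓex
  have unique_in_block : ∀ j, j ∉ F → idx j = idx jstar → j = jstar := fun j hj hidx =>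
    hexc _ hearlier j jstar hj hjstar hidx rfl
  refine ⟨jstar, ⟨hjstar, rfl⟩, unique_in_block, fun _ j hj _ hrisk => unique_in_block j hj ?_⟩
  exact idx_eq_of_forall_idx_lt_mem idx (F : Set H) hj hjstar hrisk hearlier

/-- Key combinatorial step for testing in order: under sequential exclusivity,
if `ℓ*` is the smallest block index containing a true hypothesis and all
hypotheses in earlier blocks are false, then the block `ℓ*` contains exactly
one true hypothesis `j*`, and any true hypothesis belonging to `ρ(F,∅,n)`
must equal `j*`. Here `F` is the (finite) set of false hypotheses. -/
theorem inorder_unique_true_at_risk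
    {H : Type*} [Fintype H] [DecidableEq H]
    (s : ℕ) (idx : H → ℕ) (hidx : ∀ j, idx j ∈ Set.Icc 1 s)
    (F : Finset H)
    (hexc : ∀ i, (∀ j, idx j < i → j ∈ F) →
      ∀ j j', j ∉ F → j' ∉ F → idx j = i → idx j' = i → j = j')
    (hsome : ∃ j, j ∉ F)
    (ℓstar : ℕ)
    (hℓex : ∃ j, j ∉ F ∧ idx j = ℓstar)
    (hℓmin : ∀ j, j ∉ F → ℓstar ≤ idx j)
    (hearlier : ∀ j, idx j < ℓstar → j ∈ F)
    (T : ℕ → H → ℝ) (B : H → ℝ) :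
    ∃ jstar, (jstar ∉ F ∧ idx jstar = ℓstar) ∧
      (∀ j, j ∉ F → idx j = ℓstar → j = jstar) ∧
      ∀ (n : ℕ) (j : H), j ∉ F → B j ≤ T n j →
        (∀ j', idx j' < idx j → j' ∈ F) → j = jstar :=
  inorder_unique_true_at_risk_general idx F hexc ℓstar hℓex hearlier T B
end

section
/- If H₁, ..., H_s is a sequentially exclusive partition of H and for each j, P_{θ^{(j)}}(T_n^{(j)} ≥ B^{(j)} for some n ∈ N) ≤ α whenever θ^{(j)} ∈ H^{(j)}, then the sequential procedure that rejects H^{(j)} at sample size n if T_n^{(j)} ≥ B^{(j)} and all hypotheses in all earlier partition blocks have been rejected, controls the familywise error rate at level α: FWER(θ) ≤ α for all θ ∈ Θ. -/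
open MeasureTheory Finset
open scoped ENNReal

/-!
A true hypothesis can only be rejected after everything in earlier blocks has been rejected.
By sequential exclusivity, the lowest block containing a true hypothesis contains exactly one,
`j₁`; so whenever some true hypothesis is rejected, `j₁` is rejected too, which forces its
statistic to cross `B j₁` at some `n ∈ N`. That event has probability at most `α`.
-/

theorem exists_first_true_hypothesis {ι ϑ : Type*} (idx : ι → ℕ) (Hyp : ι → Set ϑ) (θ : ϑ)
    (hexc : ∀ i : ℕ, (∀ j, idx j < i → θ ∉ Hyp j) →
      ∀ j j', idx j = i → idx j' = i → θ ∈ Hyp j → θ ∈ Hyp j' → j = j')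
    (htrue : ∃ j, θ ∈ Hyp j) :
    ∃ j₁, θ ∈ Hyp j₁ ∧ ∀ j, θ ∈ Hyp j → j = j₁ ∨ idx j₁ < idx j := by
  classical
  have hblock : ∃ i, ∃ j, idx j = i ∧ θ ∈ Hyp j := by
    obtain ⟨j, hj⟩ := htrue
    exact ⟨idx j, j, rfl, hj⟩
  obtain ⟨j₁, hj₁i, hj₁⟩ := Nat.find_spec hblock
  have hbefore : ∀ j, idx j < Nat.find hblock → θ ∉ Hyp j :=
    fun j hlt hj => Nat.find_min hblock hlt ⟨j, rfl, hj⟩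
  refine ⟨j₁, hj₁, fun j hj => ?_⟩
  rcases (Nat.find_min' hblock ⟨j, rfl, hj⟩).eq_or_lt with heq | hlt
  · exact .inl (hexc _ hbefore j j₁ heq.symm hj₁i hj hj₁)
  · exact .inr (hj₁i ▸ hlt)

theorem rejected_crossed_and_earlier_rejected {ι : Type*} [DecidableEq ι] (idx : ι → ℕ)
    (N : Set ℕ) (T : ℕ → ι → ℝ) (B : ι → ℝ) (ρ : Finset ι → Finset ι → ℕ → Finset ι)
    (hρ : ∀ R A m j, j ∈ ρ R A m → B j ≤ T m j ∧ ∀ j', idx j' < idx j → j' ∈ R)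
    {R A : ℕ → Finset ι} (hR0 : R 0 = ∅)
    (hRstep : ∀ i, R (i + 1) = R i ∨ ∃ m ∈ N, R (i + 1) = R i ∪ ρ (R i) (A i) m) (n : ℕ) :
    ∀ j ∈ R n, (∃ m ∈ N, B j ≤ T m j) ∧ ∀ j', idx j' < idx j → j' ∈ R n := by
  induction n with
  | zero => simp [hR0]
  | succ i ih =>
    rcases hRstep i with hsame | ⟨m, hm, hgrow⟩
    · rwa [hsame]
    · intro j hj
      rw [hgrow] at hj ⊢
      rcases mem_union.mp hj with hold | hnew
      · exact (ih j hold).imp_right fun h j' hj' => mem_union_left _ (h j' hj')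
      · obtain ⟨hcross, hearlier⟩ := hρ _ _ m j hnew
        exact ⟨⟨m, hm, hcross⟩, fun j' hj' => mem_union_left _ (hearlier j' hj')⟩

theorem inorder_FWER_control_general
    {Ω ϑ ι : Type*} [MeasurableSpace Ω] [DecidableEq ι]
    (P : ϑ → Measure Ω)
    (Hyp : ι → Set ϑ) (N : Set ℕ) (α : ℝ≥0∞)
    (idx : ι → ℕ)
    (hexc : ∀ (θ : ϑ) (i : ℕ), (∀ j, idx j < i → θ ∉ Hyp j) →
      ∀ j j', idx j = i → idx j' = i → θ ∈ Hyp j → θ ∈ Hyp j' → j = j')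
    (T : Ω → ℕ → ι → ℝ) (B : ι → ℝ) (k : ℕ)
    (herr : ∀ j θ, θ ∈ Hyp j →
      P θ {ω | ∃ n ∈ N, B j ≤ T ω n j} ≤ α)
    (ρ : Ω → Finset ι → Finset ι → ℕ → Finset ι)
    (hρ : ∀ ω R A n j, j ∈ ρ ω R A n ↔
      j ∉ R ∧ j ∉ A ∧ B j ≤ T ω n j ∧ ∀ j', idx j' < idx j → j' ∈ R)
    (R A : Ω → ℕ → Finset ι)
    (hR0 : ∀ ω, R ω 0 = ∅)
    (hRstep : ∀ ω i, R ω (i + 1) = R ω i ∨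
      ∃ m ∈ N, R ω (i + 1) = R ω i ∪ ρ ω (R ω i) (A ω i) m) :
    ∀ θ, P θ {ω | ∃ j ∈ R ω k, θ ∈ Hyp j} ≤ α := by
  intro θ
  by_cases htrue : ∃ j, θ ∈ Hyp j
  · obtain ⟨j₁, hj₁, hfirst⟩ := exists_first_true_hypothesis idx Hyp θ (hexc θ) htrue
    refine (measure_mono fun ω hω => ?_).trans (herr j₁ θ hj₁)
    obtain ⟨j, hjR, hj⟩ := hω
    have hspec := rejected_crossed_and_earlier_rejected idx N (T ω) B (ρ ω)
      (fun R A m j hj => ((hρ ω R A m j).mp hj).2.2) (hR0 ω) (hRstep ω) k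
    rcases hfirst j hj with rfl | hlt
    · exact (hspec j hjR).1
    · exact (hspec j₁ ((hspec j hjR).2 j₁ hlt)).1
  · simp only [not_exists] at htrue
    simp [htrue]

/-- Corollary 3.2: FWER control of the sequential procedure for testing
hypotheses in order. If the partition (given by block indices `idx`) is
sequentially exclusive and each statistic marginally satisfies
`P_θ(T_n^{(j)} ≥ B^{(j)} for some n ∈ N) ≤ α` under the null, then the
procedure that rejects `H^{(j)}` at sample size `n` when `T_n^{(j)} ≥ B^{(j)}`
and all hypotheses in earlier blocks have been rejected controls the FWER at
level `α`. -/
theorem inorder_FWER_control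
    {Ω ϑ ι : Type*} [MeasurableSpace Ω] [Fintype ι] [DecidableEq ι]
    (P : ϑ → Measure Ω) [∀ θ, IsProbabilityMeasure (P θ)]
    (Hyp : ι → Set ϑ) (N : Set ℕ) (α : ℝ≥0∞)
    (s : ℕ) (idx : ι → ℕ) (hidx : ∀ j, idx j ∈ Set.Icc 1 s)
    (hexc : ∀ (θ : ϑ) (i : ℕ), (∀ j, idx j < i → θ ∉ Hyp j) →
      ∀ j j', idx j = i → idx j' = i → θ ∈ Hyp j → θ ∈ Hyp j' → j = j')
    (T : Ω → ℕ → ι → ℝ) (B : ι → ℝ) (k : ℕ) (hk : k = Fintype.card ι)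
    (herr : ∀ j θ, θ ∈ Hyp j →
      P θ {ω | ∃ n ∈ N, B j ≤ T ω n j} ≤ α)
    (ρ : Ω → Finset ι → Finset ι → ℕ → Finset ι)
    (hρ : ∀ ω R A n j, j ∈ ρ ω R A n ↔
      j ∉ R ∧ j ∉ A ∧ B j ≤ T ω n j ∧ ∀ j', idx j' < idx j → j' ∈ R)
    (R A : Ω → ℕ → Finset ι)
    (hR0 : ∀ ω, R ω 0 = ∅)
    (hA : ∀ ω i, Disjoint (A ω i) (R ω i))
    (hRstep : ∀ ω i, R ω (i + 1) = R ω i ∨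
      ∃ m ∈ N, R ω (i + 1) = R ω i ∪ ρ ω (R ω i) (A ω i) m) :
    ∀ θ, P θ {ω | ∃ j ∈ R ω k, θ ∈ Hyp j} ≤ α :=
  inorder_FWER_control_general P Hyp N α idx hexc T B k herr ρ hρ R A hR0 hRstep
end

section
/- Let H^{(1)}, ..., H^{(k)} be hypotheses (subsets of parameter spaces) and let H = {⋂_{j∈J} H^{(j)} : ∅ ≠ J ⊆ {1,...,k}} be the family of all intersection hypotheses. Define inductively H_i = {H = ⋂_{j∈J} H^{(j)} : |J| = k − i + 1, and H ∉ H_{i'} for any i' < i} for i = 1, ..., k. Then H₁, ..., H_k is a partition of H and it is sequentially exclusive: for each i, if every hypothesis in ⋃_{i'<i} H_{i'} is false under θ, then H_i contains at most one hypothesis true under θ. -/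
/-!
Every intersection over a nonempty `J` first appears in some block `i ≤ k - |J| + 1`. If two
distinct members `⋂ J`, `⋂ J'` of block `i` are both true under `θ`, then so is `⋂ (J ∪ J')`,
and since `|J ∪ J'| > |J|` it lies in an earlier block.
-/

open Finset

/-- The blocks of the closed-testing partition: `closedBlocks k Hb i` consists
of all intersection hypotheses `⋂_{j ∈ J} H^{(j)}` with `|J| = k − i + 1`
that do not already belong to an earlier block. -/
def closedBlocks {Θ : Type*} (k : ℕ) (Hb : Fin k → Set Θ) : ℕ → Set (Set Θ)
  | i => {S | (∃ J : Finset (Fin k), J.card = k - i + 1 ∧ S = ⋂ j ∈ J, Hb j) ∧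
      ∀ i' < i, S ∉ closedBlocks k Hb i'}

theorem Finset.card_lt_card_union_of_ne {α : Type*} [DecidableEq α] {s t : Finset α}
    (hst : s ≠ t) (hcard : s.card = t.card) : s.card < (s ∪ t).card := by
  refine Finset.card_lt_card (Finset.ssubset_iff_subset_ne.mpr ⟨subset_union_left, ?_⟩)
  intro hs
  exact hst (Finset.eq_of_subset_of_card_le (Finset.union_eq_left.mp hs.symm) hcard.le).symm

section ClosedBlocks

variable {Θ : Type*} {k : ℕ} {Hb : Fin k → Set Θ} {S : Set Θ} {i : ℕ}

theorem mem_closedBlocks :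
    S ∈ closedBlocks k Hb i ↔
      (∃ J : Finset (Fin k), J.card = k - i + 1 ∧ S = ⋂ j ∈ J, Hb j) ∧
      ∀ i' < i, S ∉ closedBlocks k Hb i' := by
  rw [closedBlocks]
  rfl

theorem closedBlocks_disjoint {i i' : ℕ} (h : i ≠ i') :
    Disjoint (closedBlocks k Hb i) (closedBlocks k Hb i') := by
  wlog hlt : i < i' generalizing i i'
  · exact (this h.symm (h.symm.lt_of_le (not_lt.mp hlt))).symm
  exact Set.disjoint_right.mpr fun _ hS' hS => (mem_closedBlocks.mp hS').2 i hlt hS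

theorem one_le_of_mem_closedBlocks (h : S ∈ closedBlocks k Hb i) : 1 ≤ i := by
  obtain ⟨⟨J, hJ, -⟩, -⟩ := mem_closedBlocks.mp h
  have : J.card ≤ k := by simpa using J.card_le_univ
  omega

theorem exists_mem_closedBlocks_le (J : Finset (Fin k)) (hJ : J.card = k - i + 1) :
    ∃ i₀ ≤ i, ⋂ j ∈ J, Hb j ∈ closedBlocks k Hb i₀ := by
  by_cases hearlier : ∃ i' < i, ⋂ j ∈ J, Hb j ∈ closedBlocks k Hb i'
  · obtain ⟨i', hi', hmem⟩ := hearlier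
    exact ⟨i', hi'.le, hmem⟩
  · push Not at hearlier
    exact ⟨i, le_rfl, mem_closedBlocks.mpr ⟨⟨J, hJ, rfl⟩, hearlier⟩⟩

theorem exists_mem_closedBlocks_le_of_nonempty {J : Finset (Fin k)} (hJ : J.Nonempty) :
    ∃ i₀, 1 ≤ i₀ ∧ i₀ + J.card ≤ k + 1 ∧ ⋂ j ∈ J, Hb j ∈ closedBlocks k Hb i₀ := by
  have hpos := hJ.card_pos
  have hle : J.card ≤ k := by simpa using J.card_le_univ
  obtain ⟨i₀, hi₀, hmem⟩ := exists_mem_closedBlocks_le (Hb := Hb) (i := k - J.card + 1) J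
    (by omega)
  exact ⟨i₀, one_le_of_mem_closedBlocks hmem, by omega, hmem⟩

theorem iUnion_closedBlocks :
    ⋃ i ∈ Set.Icc 1 k, closedBlocks k Hb i =
      {S | ∃ J : Finset (Fin k), J.Nonempty ∧ S = ⋂ j ∈ J, Hb j} := by
  ext S
  simp only [Set.mem_iUnion, Set.mem_ofPred_eq, exists_prop]
  constructor
  · rintro ⟨i, ⟨hi1, hik⟩, hS⟩
    obtain ⟨⟨J, hJ, rfl⟩, -⟩ := mem_closedBlocks.mp hS
    exact ⟨J, Finset.card_pos.mp (by omega), rfl⟩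
  · rintro ⟨J, hJ, rfl⟩
    have := hJ.card_pos
    obtain ⟨i₀, hi₀1, hi₀, hmem⟩ := exists_mem_closedBlocks_le_of_nonempty (Hb := Hb) hJ
    exact ⟨i₀, ⟨hi₀1, by omega⟩, hmem⟩

theorem eq_of_true_mem_closedBlocks {θ : Θ}
    (hfalse : ∀ i' < i, ∀ S ∈ closedBlocks k Hb i', θ ∉ S) {S S' : Set Θ}
    (hS : S ∈ closedBlocks k Hb i) (hS' : S' ∈ closedBlocks k Hb i)
    (hθS : θ ∈ S) (hθS' : θ ∈ S') : S = S' := by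
  obtain ⟨⟨J, hJ, rfl⟩, -⟩ := mem_closedBlocks.mp hS
  obtain ⟨⟨J', hJ', rfl⟩, -⟩ := mem_closedBlocks.mp hS'
  by_contra hne
  have hJJ' : J ≠ J' := fun h => hne (h ▸ rfl)
  have hlt := Finset.card_lt_card_union_of_ne hJJ' (hJ.trans hJ'.symm)
  have hθU : θ ∈ ⋂ j ∈ J ∪ J', Hb j := by
    rw [Finset.set_biInter_inter]
    exact ⟨hθS, hθS'⟩
  obtain ⟨i₀, -, hi₀, hmem⟩ :=
    exists_mem_closedBlocks_le_of_nonempty (Hb := Hb) (J := J ∪ J')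
      (Finset.card_pos.mp (by omega))
  exact hfalse i₀ (by omega) _ hmem hθU

end ClosedBlocks

theorem closed_testing_partition_sequentially_exclusive_general
    {Θ : Type*} (k : ℕ) (Hb : Fin k → Set Θ) :
    (∀ i i', 1 ≤ i → i ≤ k → 1 ≤ i' → i' ≤ k → i ≠ i' →
      Disjoint (closedBlocks k Hb i) (closedBlocks k Hb i')) ∧
    (⋃ i ∈ Set.Icc 1 k, closedBlocks k Hb i) =
      {S | ∃ J : Finset (Fin k), J.Nonempty ∧ S = ⋂ j ∈ J, Hb j} ∧
    (∀ (θ : Θ) (i : ℕ), (∀ i' < i, ∀ S ∈ closedBlocks k Hb i', θ ∉ S) →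
      ∀ S ∈ closedBlocks k Hb i, ∀ S' ∈ closedBlocks k Hb i,
        θ ∈ S → θ ∈ S' → S = S') :=
  ⟨fun _ _ _ _ _ _ h => closedBlocks_disjoint h, iUnion_closedBlocks,
    fun _ _ hfalse _ hS _ hS' => eq_of_true_mem_closedBlocks hfalse hS hS'⟩

/-- The closed-testing blocks `H_1, ..., H_k` form a partition of the family of
all (nonempty-index) intersection hypotheses, and this partition is
sequentially exclusive: if every hypothesis in the earlier blocks is false
under `θ`, then block `i` contains at most one hypothesis true under `θ`. -/
theorem closed_testing_partition_sequentially_exclusive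
    {Θ : Type*} (k : ℕ) (hk : 1 ≤ k) (Hb : Fin k → Set Θ) :
    (∀ i i', 1 ≤ i → i ≤ k → 1 ≤ i' → i' ≤ k → i ≠ i' →
      Disjoint (closedBlocks k Hb i) (closedBlocks k Hb i')) ∧
    (⋃ i ∈ Set.Icc 1 k, closedBlocks k Hb i) =
      {S | ∃ J : Finset (Fin k), J.Nonempty ∧ S = ⋂ j ∈ J, Hb j} ∧
    (∀ (θ : Θ) (i : ℕ), (∀ i' < i, ∀ S ∈ closedBlocks k Hb i', θ ∉ S) →
      ∀ S ∈ closedBlocks k Hb i, ∀ S' ∈ closedBlocks k Hb i,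
        θ ∈ S → θ ∈ S' → S = S') :=
  closed_testing_partition_sequentially_exclusive_general k Hb
end

section
/- Suppose for each j and s, P_{θ^{(j)}}(T_n^{(j)} ≥ B_s^{(j)} for some n, with T_{n'}^{(j)} > A₁^{(j)} for all n' < n) ≤ α/(k − s + 1) for θ^{(j)} ∈ H^{(j)}, and symmetrically P_{θ^{(j)}}(T_n^{(j)} ≤ A_s^{(j)} for some n, with T_{n'}^{(j)} < B₁^{(j)} for all n' < n) ≤ β/(k − s + 1) for θ^{(j)} ∈ G^{(j)}. Define the acceptance function ρ̃(R, A, n) = {H^{(j)} ∉ R ∪ A : T̃_n^{(j)} ≤ −(k − |A|)}. Then ρ̃ satisfies the monotonicity condition with the roles of R and A swapped: for A ⊆ A' and R disjoint from A, ρ̃(R, A, n) ⊆ ρ̃(∅, A', n) ∪ A'. -/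
open MeasureTheory Finset
open scoped ENNReal

/-! Enlarging the accepted set from `A` to `A' ⊇ A` raises the acceptance threshold
`-(k - |A|)`, so a hypothesis that passes the threshold for `A` and is not in `A'`
still passes it for `A'`. -/

lemma neg_sub_card_le_of_subset {ι : Type*} {A A' : Finset ι} (h : A ⊆ A') (k : ℝ) :
    -(k - #A) ≤ -(k - #A') := by
  gcongr

theorem acceptance_function_monotone_general
    {Ω ι : Type*} [DecidableEq ι]
    (Tt : Ω → ℕ → ι → ℝ)
    (k : ℕ)
    (ρt : Ω → Finset ι → Finset ι → ℕ → Finset ι)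
    (hρt : ∀ ω R A n j, j ∈ ρt ω R A n ↔
      j ∉ R ∧ j ∉ A ∧ Tt ω n j ≤ -((k : ℝ) - A.card)) :
    ∀ (ω : Ω) (R A A' : Finset ι) (n : ℕ), A ⊆ A' → Disjoint R A →
      ρt ω R A n ⊆ ρt ω ∅ A' n ∪ A' := by
  intro ω R A A' n hAA' _ j hj
  rw [mem_union, or_iff_not_imp_right]
  intro hjA'
  obtain ⟨-, -, hT⟩ := (hρt ω R A n j).mp hj
  exact (hρt ω ∅ A' n j).mpr
    ⟨notMem_empty j, hjA', hT.trans (neg_sub_card_le_of_subset hAA' k)⟩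

/-- For the Bartroff–Song procedure controlling both type I and type II FWERs:
under the marginal type I and II error conditions, the acceptance function
`ρ̃(R,A,n) = {j ∉ R ∪ A : T̃_n^{(j)} ≤ −(k − |A|)}` satisfies the monotonicity
condition with the roles of rejected and accepted sets swapped:
for `A ⊆ A'` and `R` disjoint from `A`, `ρ̃(R,A,n) ⊆ ρ̃(∅,A',n) ∪ A'`. -/
theorem acceptance_function_monotone
    {Ω ϑ ι : Type*} [MeasurableSpace Ω] [Fintype ι] [DecidableEq ι]
    (P : ϑ → Measure Ω) [∀ θ, IsProbabilityMeasure (P θ)]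
    (HypH HypG : ι → Set ϑ) (α β : ℝ≥0∞)
    (T Tt : Ω → ℕ → ι → ℝ) (Acrit Bcrit : ι → ℕ → ℝ)
    (k : ℕ) (hk : k = Fintype.card ι)
    (hI : ∀ j θ, θ ∈ HypH j → ∀ s, 1 ≤ s → s ≤ k →
      P θ {ω | ∃ n, Bcrit j s ≤ T ω n j ∧ ∀ n' < n, Acrit j 1 < T ω n' j} ≤
        α / ((k - s + 1 : ℕ) : ℝ≥0∞))
    (hII : ∀ j θ, θ ∈ HypG j → ∀ s, 1 ≤ s → s ≤ k →
      P θ {ω | ∃ n, T ω n j ≤ Acrit j s ∧ ∀ n' < n, T ω n' j < Bcrit j 1} ≤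
        β / ((k - s + 1 : ℕ) : ℝ≥0∞))
    (ρt : Ω → Finset ι → Finset ι → ℕ → Finset ι)
    (hρt : ∀ ω R A n j, j ∈ ρt ω R A n ↔
      j ∉ R ∧ j ∉ A ∧ Tt ω n j ≤ -((k : ℝ) - A.card)) :
    ∀ (ω : Ω) (R A A' : Finset ι) (n : ℕ), A ⊆ A' → Disjoint R A →
      ρt ω R A n ⊆ ρt ω ∅ A' n ∪ A' :=
  acceptance_function_monotone_general Tt k ρt hρt
end
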